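/- Let N ≥ 1 and let Z₁, …, Z_N be nonempty finite types. Let π be a probability mass function on Z₁ with π z > 0 for all z; for k = 1, …, N−1 let P_k : Z_k → Z_{k+1} → ℝ be a transition kernel with P_k z a probability mass function on Z_{k+1} and P_k z z' > 0 for all z, z'; and let ω : Z_N → ℝ satisfy 0 < ω z ≤ 1 for all z. Define forward marginals α₁ = π, α_{k+1}(z') = ∑_z α_k(z) · P_k z z', and the likelihood L = ∑_z α_N(z) · ω(z). Let q₁, …, q_N be arbitrary probability mass functions with q_k on Z_k, and for l = 2, …, N let Q_l : Z_{l-1} → Z_l → ℝ be arbitrary transition kernels with each Q_l z a probability mass function on Z_l. Define propagated variational marginals q_{k→k} = q_k and q_{k→l}(z') = ∑_z q_{k→(l-1)}(z) · Q_l z z' for k < l ≤ N. Define the local losses (with convention 0 · log 0 = 0): ℓ_k^{(α)} = ∑_z q_k(z) · log (q_k(z)/α_k(z)); for k < l ≤ N, ℓ_{k,l}^{(ρ)} = ∑_{z'} q_{k→l}(z') · log ( q_{k→l}(z') / ∑_z q_{k→(l-1)}(z) · P_{l-1} z z' ) − ∑_z ∑_{z'} q_{k→(l-1)}(z) · q_{k→l}(z')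 · log (P_{l-1} z z'); and ℓ_k^{(ω)} = −∑_z q_{k→N}(z) · log (ω(z)). Then the negative log-likelihood is bounded by the sum of local losses: −log L ≤ ∑_{k=1}^N [ ℓ_k^{(α)} + ℓ_k^{(ω)} + ∑_{l=k+1}^N ℓ_{k,l}^{(ρ)} ]. -/

import Mathlib

/-!
Every block-local loss is nonnegative: `ℓ^{(α)}` and the first part of `ℓ^{(ρ)}` are
Kullback–Leibler divergences between probability vectors, while `ℓ^{(ω)}` and the
cross-entropy part of `ℓ^{(ρ)}` are `-∑ p log w` with `w ≤ 1`. So the whole sum dominates its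
`k = N` term, and that term, `KL(q_N ‖ α_N) - ∑ q_N log ω`, is the evidence lower bound
for `-log ∑ α_N ω` (Gibbs' inequality applied to the unnormalised weights `α_N ω`).
-/

open Finset

section

open Real

lemma sub_le_mul_log_div {p r : ℝ} (hp : 0 ≤ p) (hr : 0 < r) : p - r ≤ p * log (p / r) := by
  have h := mul_nonneg hr.le (InformationTheory.klFun_nonneg (div_nonneg hp hr.le))
  rw [InformationTheory.klFun_apply] at h
  linear_combination h + (log (p / r) - 1) * mul_div_cancel₀ p hr.ne'

lemma mul_log_div_mul (p : ℝ) {a b : ℝ} (ha : a ≠ 0) (hb : b ≠ 0) :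
    p * log (p / (a * b)) = p * log (p / a) - p * log b := by
  rcases eq_or_ne p 0 with rfl | hp
  · simp
  · rw [div_mul_eq_div_div, log_div (div_ne_zero hp ha) hb, mul_sub]

variable {ι κ : Type*} [Fintype ι]

theorem neg_log_sum_le_sum_mul_log_div {p r : ι → ℝ} (hp : p ∈ stdSimplex ℝ ι)
    (hr : ∀ i, 0 < r i) : -log (∑ i, r i) ≤ ∑ i, p i * log (p i / r i) := by
  have hS : 0 < ∑ i, r i :=
    sum_pos (fun i _ => hr i) (nonempty_of_sum_ne_zero (hp.2 ▸ one_ne_zero))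
  have hS' : (∑ i, r i)⁻¹ ≠ 0 := inv_ne_zero hS.ne'
  -- Compare `p` with the normalised vector `r / ∑ r`, whose total mass is that of `p`.
  have key := sum_le_sum fun i (_ : i ∈ univ) =>
    sub_le_mul_log_div (hp.1 i) (mul_pos (hr i) (inv_pos.2 hS))
  simp only [mul_log_div_mul _ (hr _).ne' hS', sum_sub_distrib, ← sum_mul, hp.2,
    mul_inv_cancel₀ hS.ne', log_inv, one_mul] at key
  linarith

theorem sum_mul_log_div_nonneg {p r : ι → ℝ} (hp : p ∈ stdSimplex ℝ ι) (hr : ∀ i, 0 < r i)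
    (hr1 : ∑ i, r i = 1) : 0 ≤ ∑ i, p i * log (p i / r i) := by
  simpa [hr1] using neg_log_sum_le_sum_mul_log_div hp hr

lemma sum_mul_log_nonpos {p w : ι → ℝ} (hp : ∀ i, 0 ≤ p i) (hw₀ : ∀ i, 0 ≤ w i)
    (hw₁ : ∀ i, w i ≤ 1) : ∑ i, p i * log (w i) ≤ 0 :=
  sum_nonpos fun i _ => mul_nonpos_of_nonneg_of_nonpos (hp i) (log_nonpos (hw₀ i) (hw₁ i))

theorem neg_log_sum_mul_le {q a w : ι → ℝ} (hq : q ∈ stdSimplex ℝ ι) (ha : ∀ i, 0 < a i)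
    (hw : ∀ i, 0 < w i) :
    -log (∑ i, a i * w i) ≤ ∑ i, q i * log (q i / a i) + -∑ i, q i * log (w i) :=
  calc -log (∑ i, a i * w i)
      ≤ ∑ i, q i * log (q i / (a i * w i)) :=
        neg_log_sum_le_sum_mul_log_div hq fun i => mul_pos (ha i) (hw i)
    _ = _ := by simp only [mul_log_div_mul _ (ha _).ne' (hw _).ne', sum_sub_distrib]; ring

variable {μ : ι → ℝ} {K : ι → κ → ℝ}

lemma sum_mul_kernel_pos (hμ : μ ∈ stdSimplex ℝ ι) {j : κ} (hK : ∀ i, 0 < K i j) :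
    0 < ∑ i, μ i * K i j := by
  obtain ⟨i, -, hi⟩ :=
    exists_lt_of_sum_lt (s := univ) (f := fun _ => (0 : ℝ)) (g := μ) (by simp [hμ.2])
  exact sum_pos' (fun i _ => mul_nonneg (hμ.1 i) (hK i).le) ⟨i, mem_univ i, mul_pos hi (hK i)⟩

variable [Fintype κ]

lemma sum_mul_kernel_mem_stdSimplex (hμ : μ ∈ stdSimplex ℝ ι)
    (hK : ∀ i, K i ∈ stdSimplex ℝ κ) : (fun j => ∑ i, μ i * K i j) ∈ stdSimplex ℝ κ :=
  ⟨fun j => sum_nonneg fun i _ => mul_nonneg (hμ.1 i) ((hK i).1 j), by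
    rw [sum_comm]; simp only [← mul_sum, (hK _).2, mul_one, hμ.2]⟩

theorem bootstrapped_loss_nonneg (hμ : μ ∈ stdSimplex ℝ ι) {ν : κ → ℝ}
    (hν : ν ∈ stdSimplex ℝ κ) (hK : ∀ i, K i ∈ stdSimplex ℝ κ) (hK_pos : ∀ i j, 0 < K i j) :
    0 ≤ ∑ j, ν j * log (ν j / ∑ i, μ i * K i j) - ∑ i, ∑ j, μ i * ν j * log (K i j) := by
  have hkl := sum_mul_log_div_nonneg hν (fun j => sum_mul_kernel_pos hμ fun i => hK_pos i j)
    (sum_mul_kernel_mem_stdSimplex hμ hK).2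
  have hce : ∑ i, ∑ j, μ i * ν j * log (K i j) ≤ 0 :=
    sum_nonpos fun i _ => sum_mul_log_nonpos (fun j => mul_nonneg (hμ.1 i) (hν.1 j))
      (hK i).1 fun j => (mem_Icc_of_mem_stdSimplex (hK i) j).2
  linarith

end

theorem forward_mem_stdSimplex {Z : ℕ → Type*} [∀ k, Fintype (Z k)] {μ : ∀ k, Z k → ℝ}
    {K : ∀ k, Z k → Z (k + 1) → ℝ} {a b : ℕ} (ha : μ a ∈ stdSimplex ℝ (Z a))
    (hK : ∀ k, a ≤ k → k < b → ∀ z, K k z ∈ stdSimplex ℝ (Z (k + 1)))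
    (hrec : ∀ k, a ≤ k → k < b → ∀ z', μ (k + 1) z' = ∑ z, μ k z * K k z z')
    {k : ℕ} (hak : a ≤ k) (hkb : k ≤ b) : μ k ∈ stdSimplex ℝ (Z k) := by
  induction k, hak using Nat.le_induction with
  | base => exact ha
  | succ k hak ih =>
    have hkb' : k < b := by omega
    rw [show μ (k + 1) = fun z' => ∑ z, μ k z * K k z z' from funext (hrec k hak hkb')]
    exact sum_mul_kernel_mem_stdSimplex (ih hkb'.le) (hK k hak hkb')

/-- `qp k l` is the paper's `q_{k→l}`, `Q l` its `Q_{l+1}`, and the summation index `j` its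
`l - 1`. -/
theorem block_local_loss_bound_general (N : ℕ) (hN : 1 ≤ N)
    (Z : ℕ → Type*) [∀ k, Fintype (Z k)]
    (π : Z 1 → ℝ) (hπ_sum : ∑ z, π z = 1) (hπ_pos : ∀ z, 0 < π z)
    (P : ∀ k : ℕ, Z k → Z (k + 1) → ℝ)
    (hP_sum : ∀ k, 1 ≤ k → k < N → ∀ z : Z k, ∑ z', P k z z' = 1)
    (hP_pos : ∀ k, 1 ≤ k → k < N → ∀ (z : Z k) (z' : Z (k + 1)), 0 < P k z z')
    (ω : Z N → ℝ) (hω_pos : ∀ z, 0 < ω z) (hω_le : ∀ z, ω z ≤ 1)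
    (α : ∀ k : ℕ, Z k → ℝ)
    (hα1 : ∀ z, α 1 z = π z)
    (hα : ∀ k, 1 ≤ k → k < N → ∀ z' : Z (k + 1), α (k + 1) z' = ∑ z, α k z * P k z z')
    (L : ℝ) (hL : L = ∑ z, α N z * ω z)
    (q : ∀ k : ℕ, Z k → ℝ)
    (hq_sum : ∀ k, 1 ≤ k → k ≤ N → ∑ z, q k z = 1)
    (hq_nonneg : ∀ k z, 0 ≤ q k z)
    (Q : ∀ l : ℕ, Z l → Z (l + 1) → ℝ)
    (hQ_sum : ∀ l, 1 ≤ l → l < N → ∀ z : Z l, ∑ z', Q l z z' = 1)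
    (hQ_nonneg : ∀ l (z : Z l) (z' : Z (l + 1)), 0 ≤ Q l z z')
    (qp : ℕ → ∀ l : ℕ, Z l → ℝ)
    (hqp_init : ∀ k, 1 ≤ k → k ≤ N → ∀ z, qp k k z = q k z)
    (hqp_rec : ∀ k l, 1 ≤ k → k ≤ l → l < N →
      ∀ z' : Z (l + 1), qp k (l + 1) z' = ∑ z, qp k l z * Q l z z') :
    -Real.log L ≤ ∑ k ∈ Finset.Icc 1 N,
      ((∑ z, q k z * Real.log (q k z / α k z))
        + (-∑ z, qp k N z * Real.log (ω z))
        + ∑ j ∈ Finset.Icc k (N - 1),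
            ((∑ z', qp k (j + 1) z' *
                Real.log (qp k (j + 1) z' / ∑ z, qp k j z * P j z z'))
              - ∑ z, ∑ z', qp k j z * qp k (j + 1) z' * Real.log (P j z z'))) := by
  have hP : ∀ k, 1 ≤ k → k < N → ∀ z, P k z ∈ stdSimplex ℝ (Z (k + 1)) :=
    fun k hk hkN z => ⟨fun z' => (hP_pos k hk hkN z z').le, hP_sum k hk hkN z⟩
  have hα_mem : ∀ k, 1 ≤ k → k ≤ N → α k ∈ stdSimplex ℝ (Z k) :=
    fun k hk hkN => forward_mem_stdSimplex
      ⟨fun z => (hα1 z ▸ hπ_pos z).le, by simp only [hα1, hπ_sum]⟩ hP hα hk hkN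
  have hα_pos : ∀ k, 1 ≤ k → k ≤ N → ∀ z, 0 < α k z := by
    intro k hk hkN z
    rcases eq_or_lt_of_le hk with rfl | hk1
    · exact hα1 z ▸ hπ_pos z
    · obtain ⟨j, rfl⟩ := Nat.exists_eq_add_one_of_ne_zero (by omega : k ≠ 0)
      rw [hα j (by omega) (by omega)]
      exact sum_mul_kernel_pos (hα_mem j (by omega) (by omega))
        fun z₀ => hP_pos j (by omega) (by omega) z₀ z
  have hqp_mem : ∀ k, 1 ≤ k → k ≤ N → ∀ l, k ≤ l → l ≤ N → qp k l ∈ stdSimplex ℝ (Z l) :=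
    fun k hk hkN l hkl hlN => forward_mem_stdSimplex
      ⟨fun z => hqp_init k hk hkN z ▸ hq_nonneg k z,
        by simp only [hqp_init k hk hkN, hq_sum k hk hkN]⟩
      (fun j hkj hjN z => ⟨hQ_nonneg j z, hQ_sum j (by omega) hjN z⟩)
      (fun j hkj hjN => hqp_rec k j hk hkj hjN) hkl hlN
  refine le_trans ?_ (single_le_sum (fun k hk => ?_) (mem_Icc.2 ⟨hN, le_rfl⟩))
  · rw [Icc_eq_empty (by omega), sum_empty, add_zero, hL]
    simp only [hqp_init N hN le_rfl]
    exact neg_log_sum_mul_le ⟨hq_nonneg N, hq_sum N hN le_rfl⟩ (hα_pos N hN le_rfl) hω_pos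
  · obtain ⟨hk, hkN⟩ := mem_Icc.1 hk
    refine add_nonneg (add_nonneg ?_ ?_) (sum_nonneg fun j hj => ?_)
    · exact sum_mul_log_div_nonneg ⟨hq_nonneg k, hq_sum k hk hkN⟩ (hα_pos k hk hkN)
        (hα_mem k hk hkN).2
    · exact neg_nonneg.2 (sum_mul_log_nonpos (hqp_mem k hk hkN N hkN le_rfl).1
        (fun z => (hω_pos z).le) hω_le)
    · obtain ⟨hkj, hjN⟩ := mem_Icc.1 hj
      exact bootstrapped_loss_nonneg (hqp_mem k hk hkN j hkj (by omega))
        (hqp_mem k hk hkN (j + 1) (by omega) (by omega)) (hP j (by omega) (by omega))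
        (hP_pos j (by omega) (by omega))

/-- Theorem S1 of the paper, for a finite-state Markov chain
`x → z₁ → ⋯ → z_N → y`: the negative log-likelihood `-log L` is bounded from
above by the sum of block-local losses
`∑ₖ [ ℓ_k^{(α)} + ℓ_k^{(ω)} + ∑_{l=k+1}^N ℓ_{k,l}^{(ρ)} ]`.
Here `α k` are the forward marginals (with `α 1 = π` and the forward
recursion through the transitions `P k : Z k → Z (k+1)`), `ω = p(y|z_N)`,
`L = p(y|x)`, `q k` are arbitrary variational pmfs, `Q l : Z l → Z (l+1)` are
arbitrary variational transition kernels (the paper's `Q_{l+1}`), and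
`qp k l = q_{k→l}` are the propagated variational marginals (`qp k k = q k`,
`qp k (l+1) z' = ∑_z qp k l z * Q l z z'`). The index `j` below corresponds to
the paper's `l - 1`, so `∑_{l=k+1}^N ℓ_{k,l}^{(ρ)} = ∑_{j=k}^{N-1} ℓ^{(ρ)}_{k,j+1}`. -/
theorem block_local_loss_bound (N : ℕ) (hN : 1 ≤ N)
    (Z : ℕ → Type*) [∀ k, Fintype (Z k)] [∀ k, Nonempty (Z k)]
    (π : Z 1 → ℝ) (hπ_sum : ∑ z, π z = 1) (hπ_pos : ∀ z, 0 < π z)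
    (P : ∀ k : ℕ, Z k → Z (k + 1) → ℝ)
    (hP_sum : ∀ k, 1 ≤ k → k < N → ∀ z : Z k, ∑ z', P k z z' = 1)
    (hP_pos : ∀ k, 1 ≤ k → k < N → ∀ (z : Z k) (z' : Z (k + 1)), 0 < P k z z')
    (ω : Z N → ℝ) (hω_pos : ∀ z, 0 < ω z) (hω_le : ∀ z, ω z ≤ 1)
    (α : ∀ k : ℕ, Z k → ℝ)
    (hα1 : ∀ z, α 1 z = π z)
    (hα : ∀ k, 1 ≤ k → k < N → ∀ z' : Z (k + 1), α (k + 1) z' = ∑ z, α k z * P k z z')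
    (L : ℝ) (hL : L = ∑ z, α N z * ω z)
    (q : ∀ k : ℕ, Z k → ℝ)
    (hq_sum : ∀ k, 1 ≤ k → k ≤ N → ∑ z, q k z = 1)
    (hq_nonneg : ∀ k z, 0 ≤ q k z)
    (Q : ∀ l : ℕ, Z l → Z (l + 1) → ℝ)
    (hQ_sum : ∀ l, 1 ≤ l → l < N → ∀ z : Z l, ∑ z', Q l z z' = 1)
    (hQ_nonneg : ∀ l (z : Z l) (z' : Z (l + 1)), 0 ≤ Q l z z')
    (qp : ℕ → ∀ l : ℕ, Z l → ℝ)
    (hqp_init : ∀ k, 1 ≤ k → k ≤ N → ∀ z, qp k k z = q k z)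
    (hqp_rec : ∀ k l, 1 ≤ k → k ≤ l → l < N →
      ∀ z' : Z (l + 1), qp k (l + 1) z' = ∑ z, qp k l z * Q l z z') :
    -Real.log L ≤ ∑ k ∈ Finset.Icc 1 N,
      ((∑ z, q k z * Real.log (q k z / α k z))
        + (-∑ z, qp k N z * Real.log (ω z))
        + ∑ j ∈ Finset.Icc k (N - 1),
            ((∑ z', qp k (j + 1) z' *
                Real.log (qp k (j + 1) z' / ∑ z, qp k j z * P j z z'))
              - ∑ z, ∑ z', qp k j z * qp k (j + 1) z' * Real.log (P j z z'))) :=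
  block_local_loss_bound_general N hN Z π hπ_sum hπ_pos P hP_sum hP_pos ω hω_pos hω_le α hα1 hα L hL
    q hq_sum hq_nonneg Q hQ_sum hQ_nonneg qp hqp_init hqp_rec
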